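/- For every λ ∈ ℂ with λ ≠ 0, λ ≠ −1/2 and λ ≠ −27/4, setting t = −4λ one has (648 + 1824λ + 3157λ² + 476λ³ + 48λ⁴)/(λ²·(27 + 58λ + 8λ²)²) = 16·(10368 − 7296t + 3157t² − 119t³ + 3t⁴)/(4·t²·(t−2)²·(t−27)²). -/

import Mathlib

theorem sigma_match_no10 (l : ℂ)
    (t : ℂ) (ht : t = -4 * l) :
    (648 + 1824 * l + 3157 * l ^ 2 + 476 * l ^ 3 + 48 * l ^ 4)
        / (l ^ 2 * (27 + 58 * l + 8 * l ^ 2) ^ 2)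
      = 16 * (10368 - 7296 * t + 3157 * t ^ 2 - 119 * t ^ 3 + 3 * t ^ 4)
        / (4 * t ^ 2 * (t - 2) ^ 2 * (t - 27) ^ 2) := by
  subst ht
  -- Since `t - 2 = -2(2λ + 1)`, `t - 27 = -(4λ + 27)` and `27 + 58λ + 8λ² = (2λ + 1)(4λ + 27)`,
  -- numerator and denominator are each `256` times their counterparts on the left.
  have hnum : 16 * (10368 - 7296 * (-4 * l) + 3157 * (-4 * l) ^ 2 - 119 * (-4 * l) ^ 3
      + 3 * (-4 * l) ^ 4) = 256 * (648 + 1824 * l + 3157 * l ^ 2 + 476 * l ^ 3 + 48 * l ^ 4) := by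
    ring
  have hden : 4 * (-4 * l) ^ 2 * (-4 * l - 2) ^ 2 * (-4 * l - 27) ^ 2
      = 256 * (l ^ 2 * (27 + 58 * l + 8 * l ^ 2) ^ 2) := by
    ring
  rw [hnum, hden, mul_div_mul_left _ _ (by norm_num : (256 : ℂ) ≠ 0)]
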